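/- arXiv:1102.5112 — 3 statements merged into one kernel-verified Lean document; each statement's English description precedes it below -/
import Mathlib

section
/- Let {W_n, Z_n} be pairs of discrete random variables with the size of the support of the conditional distribution of W_n given Z_n at most c^n for a constant c ≥ 1. Then sup_n E[((1/n) log P(W_n | Z_n))^2] < ∞, and hence the sequence {-(1/n) log P(W_n|Z_n)} is uniformly integrable. -/
/-! Conditioned on `Z = z`, the second moment of `log P(W | Z)` is `∑ w, q w * log (q w) ^ 2` for
a probability vector `q` supported on at most `N = cⁿ` points. Splitting at `q w = N⁻²`, the large
terms contribute at most `(2 log N)²` in total and each of the at most `N` small ones at most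
`16 / N`, because `√x * log x ^ 2 ≤ 16` on `(0, 1]`. Hence
`E[(log P(W_n | Z_n))²] ≤ 4 n² log² c + 16`, so the second moments of `(1/n) log₂ P(W_n | Z_n)`
are bounded, and a uniform `L²` bound gives uniform integrability through
`E[|X|; |X| ≥ a] ≤ E[X²] / a`. -/

open MeasureTheory Real

lemma sqrt_mul_log_sq_lt {x : ℝ} (h0 : 0 < x) (h1 : x ≤ 1) : √x * log x ^ 2 < 16 := by
  have h := abs_log_mul_self_rpow_lt x (1 / 4) h0 h1 (by norm_num)
  have hsq : √x = (x ^ (1 / 4 : ℝ)) ^ 2 := by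
    rw [← rpow_natCast, ← rpow_mul h0.le, sqrt_eq_rpow]; norm_num
  have habs : |log x * x ^ (1 / 4 : ℝ)| < 4 := by simpa using h
  calc √x * log x ^ 2 = |log x * x ^ (1 / 4 : ℝ)| ^ 2 := by rw [sq_abs, hsq]; ring
    _ < 4 ^ 2 := by gcongr
    _ = 16 := by norm_num

lemma mul_log_sq_le {x N : ℝ} (hx0 : 0 ≤ x) (hx1 : x ≤ 1) (hN : 0 < N) :
    x * log x ^ 2 ≤ x * (2 * log N) ^ 2 + 16 / N := by
  rcases hx0.eq_or_lt with rfl | hx0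
  · simp only [zero_mul, zero_add]; positivity
  rcases le_or_gt (N ^ 2)⁻¹ x with hlarge | hsmall
  · have hlow : -(2 * log N) ≤ log x := by
      simpa [log_inv, log_pow] using log_le_log (by positivity) hlarge
    have hnonpos : log x ≤ 0 := log_nonpos hx0.le hx1
    have hhigh : log x ≤ 2 * log N := by linarith
    have := mul_le_mul_of_nonneg_left (sq_le_sq' hlow hhigh) hx0.le
    linarith [show 0 ≤ 16 / N by positivity]
  · have hsqrt : √x ≤ N⁻¹ := by
      simpa [sqrt_inv, sqrt_sq hN.le] using sqrt_le_sqrt hsmall.le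
    calc x * log x ^ 2 = √x * (√x * log x ^ 2) := by rw [← mul_assoc, mul_self_sqrt hx0.le]
      _ ≤ N⁻¹ * 16 := by gcongr; exact (sqrt_mul_log_sq_lt hx0 hx1).le
      _ ≤ x * (2 * log N) ^ 2 + 16 / N := by
          rw [inv_mul_eq_div]; exact le_add_of_nonneg_left (by positivity)

lemma sum_mul_log_sq_le {ι : Type*} (s : Finset ι) {q : ι → ℝ} (hq0 : ∀ i ∈ s, 0 ≤ q i)
    (hq : ∑ i ∈ s, q i ≤ 1) {N : ℝ} (hN : 0 < N) (hs : (s.card : ℝ) ≤ N) :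
    ∑ i ∈ s, q i * log (q i) ^ 2 ≤ 4 * log N ^ 2 + 16 := by
  have hq1 : ∀ i ∈ s, q i ≤ 1 := fun i hi => (Finset.single_le_sum hq0 hi).trans hq
  calc ∑ i ∈ s, q i * log (q i) ^ 2 ≤ ∑ i ∈ s, (q i * (2 * log N) ^ 2 + 16 / N) :=
        Finset.sum_le_sum fun i hi => mul_log_sq_le (hq0 i hi) (hq1 i hi) hN
    _ = (∑ i ∈ s, q i) * (2 * log N) ^ 2 + s.card * (16 / N) := by
        rw [Finset.sum_add_distrib, Finset.sum_mul, Finset.sum_const, nsmul_eq_mul]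
    _ ≤ 1 * (2 * log N) ^ 2 + N * (16 / N) := by gcongr
    _ = 4 * log N ^ 2 + 16 := by field_simp; ring

lemma integrable_and_integral_le_of_lintegral_ofReal_le {Ω : Type*} [MeasurableSpace Ω]
    {μ : Measure Ω} {f : Ω → ℝ} (hf : AEStronglyMeasurable f μ) (hf0 : 0 ≤ᵐ[μ] f) {C : ℝ}
    (hC : 0 ≤ C) (h : ∫⁻ ω, ENNReal.ofReal (f ω) ∂μ ≤ ENNReal.ofReal C) :
    Integrable f μ ∧ ∫ ω, f ω ∂μ ≤ C := by
  refine ⟨⟨hf, (hasFiniteIntegral_iff_ofReal hf0).mpr (h.trans_lt ENNReal.ofReal_lt_top)⟩, ?_⟩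
  rw [integral_eq_lintegral_of_nonneg_ae hf0 hf]
  exact ENNReal.toReal_le_of_le_ofReal hC h

lemma setIntegral_abs_le_integral_sq_div {Ω : Type*} [MeasurableSpace Ω] {μ : Measure Ω}
    {X : Ω → ℝ} (hX : Measurable X) (hX2 : Integrable (fun ω => X ω ^ 2) μ) {a : ℝ} (ha : 0 < a) :
    ∫ ω in {ω | a ≤ |X ω|}, |X ω| ∂μ ≤ (∫ ω, X ω ^ 2 ∂μ) / a := by
  have hS : MeasurableSet {ω | a ≤ |X ω|} := measurableSet_le measurable_const hX.abs
  have hpoint : ∀ ω ∈ {ω | a ≤ |X ω|}, |X ω| ≤ X ω ^ 2 / a := fun ω hω => by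
    rw [le_div_iff₀ ha, ← sq_abs]
    exact (mul_le_mul_of_nonneg_left hω (abs_nonneg _)).trans_eq (sq _).symm
  calc ∫ ω in {ω | a ≤ |X ω|}, |X ω| ∂μ ≤ ∫ ω in {ω | a ≤ |X ω|}, X ω ^ 2 / a ∂μ :=
        integral_mono_of_nonneg (ae_of_all _ fun _ => abs_nonneg _)
          (hX2.div_const a).integrableOn (ae_restrict_of_forall_mem hS hpoint)
    _ ≤ ∫ ω, X ω ^ 2 / a ∂μ :=
        setIntegral_le_integral (hX2.div_const a) (ae_of_all _ fun _ => by positivity)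
    _ = (∫ ω, X ω ^ 2 ∂μ) / a := integral_div a _

lemma exists_setIntegral_abs_le_of_integral_sq_le {Ω ι : Type*} [MeasurableSpace Ω]
    {μ : Measure Ω} {X : ι → Ω → ℝ} (hX : ∀ i, Measurable (X i))
    (hX2 : ∀ i, Integrable (fun ω => X i ω ^ 2) μ) {B : ℝ} (hB : ∀ i, ∫ ω, X i ω ^ 2 ∂μ ≤ B)
    {ε : ℝ} (hε : 0 < ε) :
    ∃ a : ℝ, 0 < a ∧ ∀ i, ∫ ω in {ω | a ≤ |X i ω|}, |X i ω| ∂μ ≤ ε := by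
  set a := max 1 (B / ε)
  have ha : 0 < a := zero_lt_one.trans_le (le_max_left _ _)
  have hBa : B ≤ ε * a := by
    calc B = ε * (B / ε) := (mul_div_cancel₀ B hε.ne').symm
      _ ≤ ε * a := by gcongr; exact le_max_right _ _
  refine ⟨a, ha, fun i => ?_⟩
  calc ∫ ω in {ω | a ≤ |X i ω|}, |X i ω| ∂μ ≤ (∫ ω, X i ω ^ 2 ∂μ) / a :=
        setIntegral_abs_le_integral_sq_div (hX i) (hX2 i) ha
    _ ≤ ε := div_le_of_le_mul₀ ha.le hε.le ((hB i).trans hBa)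

section ConditionalPmf

variable {Ω α β : Type*} [MeasurableSpace Ω] {μ : Measure Ω} {W : Ω → α} {Z : Ω → β}

/-- `P(W = w | Z = z)` as a real number, with the junk value `0` when `P(Z = z) = 0`. -/
noncomputable def condPmf (μ : Measure Ω) (W : Ω → α) (Z : Ω → β) (w : α) (z : β) : ℝ :=
  (μ {ω | W ω = w ∧ Z ω = z}).toReal / (μ {ω | Z ω = z}).toReal

lemma condPmf_nonneg (w : α) (z : β) : 0 ≤ condPmf μ W Z w z := by
  unfold condPmf; positivity

lemma measure_eq_ofReal_condPmf_mul [IsFiniteMeasure μ] (w : α) (z : β) :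
    μ {ω | W ω = w ∧ Z ω = z} = ENNReal.ofReal (condPmf μ W Z w z) * μ {ω | Z ω = z} := by
  by_cases hz : μ {ω | Z ω = z} = 0
  · rw [hz, mul_zero]
    exact measure_mono_null (fun ω hω => hω.2) hz
  · rw [condPmf, ENNReal.ofReal_div_of_pos (ENNReal.toReal_pos hz (measure_ne_top μ _)),
      ENNReal.ofReal_toReal (measure_ne_top μ _), ENNReal.ofReal_toReal (measure_ne_top μ _),
      ENNReal.div_mul_cancel hz (measure_ne_top μ _)]

lemma apply_of_ae_of_measure_ne_zero {P : β → Prop} (h : ∀ᵐ ω ∂μ, P (Z ω)) {z : β}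
    (hz : μ {ω | Z ω = z} ≠ 0) : P z := by
  by_contra hPz
  exact hz (measure_mono_null (fun ω (hω : Z ω = z) => by simpa [hω] using hPz) (ae_iff.mp h))

variable [MeasurableSpace α]

lemma sum_condPmf_le_one [IsFiniteMeasure μ] [MeasurableSingletonClass α] (hW : Measurable W)
    (s : Finset α) (z : β) : ∑ w ∈ s, condPmf μ W Z w z ≤ 1 := by
  have hfiber : ∑ w ∈ s, μ {ω | W ω = w ∧ Z ω = z} ≤ μ {ω | Z ω = z} := by
    calc ∑ w ∈ s, μ {ω | W ω = w ∧ Z ω = z}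
        = ∑ w ∈ s, μ.restrict {ω | Z ω = z} (W ⁻¹' {w}) := by
          refine Finset.sum_congr rfl fun w _ => ?_
          rw [Measure.restrict_apply (hW (measurableSet_singleton w))]; rfl
      _ = μ.restrict {ω | Z ω = z} (W ⁻¹' s) :=
          sum_measure_preimage_singleton s fun w _ => hW (measurableSet_singleton w)
      _ ≤ μ {ω | Z ω = z} :=
          (measure_mono (Set.subset_univ _)).trans (Measure.restrict_apply_univ _).le
  simp only [condPmf, ← Finset.sum_div, ← ENNReal.toReal_sum fun w _ => measure_ne_top μ _]
  exact div_le_one_of_le₀ (ENNReal.toReal_mono (measure_ne_top μ _) hfiber) ENNReal.toReal_nonneg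

variable [MeasurableSpace β]

lemma tsum_measure_fiber_le_one [IsProbabilityMeasure μ] [MeasurableSingletonClass β]
    (hZ : Measurable Z) : ∑' z, μ {ω | Z ω = z} ≤ 1 :=
  measure_univ (μ := μ) ▸ tsum_measure_le_measure_univ
    (fun z => (hZ (measurableSet_singleton z)).nullMeasurableSet)
    fun _ _ hzz' => Disjoint.aedisjoint
      (Set.disjoint_left.mpr fun _ hz hz' => hzz' (hz.symm.trans hz'))

variable [Countable α] [Countable β] [MeasurableSingletonClass α] [MeasurableSingletonClass β]

lemma measurable_comp_pair_of_countable {γ : Type*} [MeasurableSpace γ] (hW : Measurable W)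
    (hZ : Measurable Z) (f : α → β → γ) : Measurable fun ω => f (W ω) (Z ω) :=
  (measurable_of_countable (Function.uncurry f)).comp (hW.prodMk hZ)

lemma lintegral_comp_eq_tsum_condPmf [IsFiniteMeasure μ] (hW : Measurable W)
    (hZ : Measurable Z) (g : α → β → ENNReal) :
    ∫⁻ ω, g (W ω) (Z ω) ∂μ =
      ∑' z, (∑' w, ENNReal.ofReal (condPmf μ W Z w z) * g w z) * μ {ω | Z ω = z} := by
  have hWZ : Measurable fun ω => (W ω, Z ω) := hW.prodMk hZ
  rw [show ∫⁻ ω, g (W ω) (Z ω) ∂μ = ∫⁻ ω, Function.uncurry g (W ω, Z ω) ∂μ from rfl,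
    ← lintegral_map (measurable_of_countable _) hWZ,
    lintegral_countable', ENNReal.tsum_prod', ENNReal.tsum_comm]
  refine tsum_congr fun z => ?_
  rw [← ENNReal.tsum_mul_right]
  refine tsum_congr fun w => ?_
  have hfiber : (fun ω => (W ω, Z ω)) ⁻¹' {(w, z)} = {ω | W ω = w ∧ Z ω = z} := by
    ext ω; simp
  rw [Measure.map_apply hWZ (measurableSet_singleton _), hfiber,
    measure_eq_ofReal_condPmf_mul, Function.uncurry_apply_pair]
  ring

lemma lintegral_ofReal_log_condPmf_sq_le [IsProbabilityMeasure μ] (hW : Measurable W)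
    (hZ : Measurable Z) {N : ℝ} (hN : 0 < N)
    (hsupp : ∀ᵐ ω ∂μ, ∃ s : Finset α,
      (∀ w, 0 < condPmf μ W Z w (Z ω) → w ∈ s) ∧ (s.card : ℝ) ≤ N) :
    ∫⁻ ω, ENNReal.ofReal (log (condPmf μ W Z (W ω) (Z ω)) ^ 2) ∂μ ≤
      ENNReal.ofReal (4 * log N ^ 2 + 16) := by
  set q := condPmf μ W Z
  have hq0 : ∀ w z, 0 ≤ q w z := condPmf_nonneg
  have hfiber : ∀ z, (∑' w, ENNReal.ofReal (q w z) * ENNReal.ofReal (log (q w z) ^ 2)) *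
      μ {ω | Z ω = z} ≤ ENNReal.ofReal (4 * log N ^ 2 + 16) * μ {ω | Z ω = z} := by
    intro z
    by_cases hz : μ {ω | Z ω = z} = 0
    · simp [hz]
    obtain ⟨s, hs, hcard⟩ := apply_of_ae_of_measure_ne_zero
      (P := fun z => ∃ s : Finset α, (∀ w, 0 < q w z → w ∈ s) ∧ (s.card : ℝ) ≤ N) hsupp hz
    gcongr
    have hout : ∀ w ∉ s, ENNReal.ofReal (q w z) * ENNReal.ofReal (log (q w z) ^ 2) = 0 := by
      intro w hw
      simp [le_antisymm (not_lt.mp (mt (hs w) hw)) (hq0 w z)]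
    rw [tsum_eq_sum hout]
    simp_rw [← ENNReal.ofReal_mul (hq0 _ z)]
    rw [← ENNReal.ofReal_sum_of_nonneg fun w _ => mul_nonneg (hq0 w z) (sq_nonneg _)]
    exact ENNReal.ofReal_le_ofReal <|
      sum_mul_log_sq_le s (fun w _ => hq0 w z) (sum_condPmf_le_one hW s z) hN hcard
  calc ∫⁻ ω, ENNReal.ofReal (log (q (W ω) (Z ω)) ^ 2) ∂μ
      = ∑' z, (∑' w, ENNReal.ofReal (q w z) * ENNReal.ofReal (log (q w z) ^ 2)) *
          μ {ω | Z ω = z} :=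
        lintegral_comp_eq_tsum_condPmf hW hZ fun w z => ENNReal.ofReal (log (q w z) ^ 2)
    _ ≤ ∑' z, ENNReal.ofReal (4 * log N ^ 2 + 16) * μ {ω | Z ω = z} := ENNReal.tsum_le_tsum hfiber
    _ ≤ ENNReal.ofReal (4 * log N ^ 2 + 16) := by
        rw [ENNReal.tsum_mul_left]
        exact mul_le_of_le_one_right zero_le (tsum_measure_fiber_le_one hZ)

lemma integrable_and_integral_sq_logb_condPmf_le [IsProbabilityMeasure μ] (hW : Measurable W)
    (hZ : Measurable Z) {c : ℝ} (hc : 0 < c) (n : ℕ)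
    (hsupp : ∀ᵐ ω ∂μ, ∃ s : Finset α,
      (∀ w, 0 < condPmf μ W Z w (Z ω) → w ∈ s) ∧ (s.card : ℝ) ≤ c ^ n) :
    Integrable (fun ω => (1 / (n : ℝ) * logb 2 (condPmf μ W Z (W ω) (Z ω))) ^ 2) μ ∧
      ∫ ω, (1 / (n : ℝ) * logb 2 (condPmf μ W Z (W ω) (Z ω))) ^ 2 ∂μ ≤
        (4 * log c ^ 2 + 16) / log 2 ^ 2 := by
  have hmeas := measurable_comp_pair_of_countable hW hZ fun w z => log (condPmf μ W Z w z) ^ 2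
  obtain ⟨hint, hle⟩ := integrable_and_integral_le_of_lintegral_ofReal_le
    hmeas.aestronglyMeasurable (ae_of_all _ fun _ => sq_nonneg _) (by positivity)
    (lintegral_ofReal_log_condPmf_sq_le hW hZ (pow_pos hc n) hsupp)
  have hscale : ∀ x : ℝ, (1 / (n : ℝ) * logb 2 x) ^ 2 = (1 / (n * log 2)) ^ 2 * log x ^ 2 := by
    intro x; rw [logb]; ring
  simp_rw [hscale]
  refine ⟨hint.const_mul _, ?_⟩
  rw [integral_const_mul]
  calc (1 / (n * log 2)) ^ 2 * ∫ ω, log (condPmf μ W Z (W ω) (Z ω)) ^ 2 ∂μ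
      ≤ (1 / (n * log 2)) ^ 2 * (4 * log (c ^ n) ^ 2 + 16) := by gcongr
    _ = (4 * (n * log c) ^ 2 + 16) / (n ^ 2 * log 2 ^ 2) := by rw [log_pow]; ring
    _ ≤ (4 * log c ^ 2 + 16) / log 2 ^ 2 := by
      rcases n.eq_zero_or_pos with rfl | hn
      · simp only [CharP.cast_eq_zero, ne_eq, OfNat.ofNat_ne_zero, not_false_eq_true,
          zero_pow, zero_mul, div_zero]; positivity
      · have hn1 : (1 : ℝ) ≤ n := by exact_mod_cast hn
        rw [div_le_div_iff₀ (by positivity) (by positivity)]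
        nlinarith [sq_nonneg (log c), sq_nonneg (log 2), pow_le_pow_left₀ zero_le_one hn1 2]

end ConditionalPmf

/-- If the support of the conditional distribution of W_n given Z_n has size at most
c^n (c ≥ 1), then sup_n E[((1/n) log₂ P(W_n|Z_n))²] < ∞, and the sequence
{-(1/n) log₂ P(W_n|Z_n)} is uniformly integrable. -/
theorem stmt7 {Ω : Type*} [MeasurableSpace Ω] (μ : Measure Ω) [IsProbabilityMeasure μ]
    (W Z : ℕ → Ω → ℕ) (hW : ∀ n, Measurable (W n)) (hZ : ∀ n, Measurable (Z n))
    (c : ℝ) (hc : 1 ≤ c)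
    (p : ℕ → ℕ → ℕ → ℝ)
    (hp : ∀ n w z, p n w z =
      (μ {ω | W n ω = w ∧ Z n ω = z}).toReal / (μ {ω | Z n ω = z}).toReal)
    (hsupp : ∀ n, ∀ᵐ ω ∂μ, ∃ s : Finset ℕ,
      (∀ w, 0 < p n w (Z n ω) → w ∈ s) ∧ (s.card : ℝ) ≤ c ^ n) :
    (∃ B : ℝ, ∀ n : ℕ,
        ∫ ω, ((1 / (n : ℝ)) * Real.logb 2 (p n (W n ω) (Z n ω))) ^ 2 ∂μ ≤ B) ∧
    (∀ ε > 0, ∃ a : ℝ, 0 < a ∧ ∀ n : ℕ,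
        ∫ ω in {ω | a ≤ |(1 / (n : ℝ)) * Real.logb 2 (p n (W n ω) (Z n ω))|},
          |(1 / (n : ℝ)) * Real.logb 2 (p n (W n ω) (Z n ω))| ∂μ ≤ ε) := by
  obtain rfl : p = fun n => condPmf μ (W n) (Z n) := funext fun n => funext₂ (hp n)
  have hmoment n := integrable_and_integral_sq_logb_condPmf_le (hW n) (hZ n) (by linarith) n
    (hsupp n)
  refine ⟨⟨_, fun n => (hmoment n).2⟩, fun ε hε => ?_⟩
  exact exists_setIntegral_abs_le_of_integral_sq_le
    (fun n => measurable_comp_pair_of_countable (hW n) (hZ n)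
      fun w z => 1 / (n : ℝ) * logb 2 (condPmf μ (W n) (Z n) w z))
    (fun n => (hmoment n).1) (fun n => (hmoment n).2) hε
end

section
/- Let {Z_n} be a sequence of random variables with -(1/n) log P(Z_1,...,Z_n) → H almost surely for a finite constant H (the AEP), and let {M_n} be positive-integer-valued random variables on the same probability space with M_n/n → x almost surely for a constant x > 0. Then -(1/n) log P(Z_1,...,Z_{M_n}) → H·x almost surely. -/
open MeasureTheory Filter Topology

/-! If `a n / n → H` and `m n / n → x > 0`, then `m n → ∞`, so `a (m n) / m n → H`; multiplying
by `m n / n → x` gives `a (m n) / n → H * x`. Applied pointwise to `a n = -log₂ P n ω` and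
`m = M · ω`, this holds on the intersection of the two almost-sure events. -/

lemma tendsto_atTop_of_tendsto_div_natCast {m : ℕ → ℕ} {x : ℝ} (hx : 0 < x)
    (hm : Tendsto (fun n : ℕ => (m n : ℝ) / n) atTop (𝓝 x)) : Tendsto m atTop atTop := by
  refine (tendsto_natCast_atTop_iff (R := ℝ)).mp ?_
  refine (hm.pos_mul_atTop hx tendsto_natCast_atTop_atTop).congr' ?_
  filter_upwards [eventually_ne_atTop 0] with n hn
  field_simp

lemma tendsto_comp_div_natCast {a : ℕ → ℝ} {m : ℕ → ℕ} {H x : ℝ} (hx : 0 < x)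
    (ha : Tendsto (fun n : ℕ => a n / n) atTop (𝓝 H))
    (hm : Tendsto (fun n : ℕ => (m n : ℝ) / n) atTop (𝓝 x)) :
    Tendsto (fun n : ℕ => a (m n) / n) atTop (𝓝 (H * x)) := by
  have hm_top := tendsto_atTop_of_tendsto_div_natCast hx hm
  rw [mul_comm H x]
  refine (hm.mul (ha.comp hm_top)).congr' ?_
  filter_upwards [eventually_ne_atTop 0, hm_top.eventually_ne_atTop 0] with n hn hmn
  simp only [Function.comp_apply]
  field_simp

theorem stmt8_general {Ω : Type*} [MeasurableSpace Ω] (μ : Measure Ω)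
    (M : ℕ → Ω → ℕ) (H x : ℝ) (hx : 0 < x)
    (P : ℕ → Ω → ℝ)
    (hAEP : ∀ᵐ ω ∂μ,
      Tendsto (fun n : ℕ => -(1 / (n : ℝ)) * Real.logb 2 (P n ω)) atTop (nhds H))
    (hM : ∀ᵐ ω ∂μ,
      Tendsto (fun n : ℕ => (M n ω : ℝ) / n) atTop (nhds x)) :
    ∀ᵐ ω ∂μ,
      Tendsto (fun n : ℕ => -(1 / (n : ℝ)) * Real.logb 2 (P (M n ω) ω)) atTop
        (nhds (H * x)) := by
  have neg_one_div_mul (n : ℕ) (b : ℝ) : -(1 / (n : ℝ)) * b = -b / n := by ring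
  filter_upwards [hAEP, hM] with ω hAEPω hMω
  simp only [neg_one_div_mul] at hAEPω ⊢
  exact tendsto_comp_div_natCast (a := fun n => -Real.logb 2 (P n ω)) hx hAEPω hMω

/-- AEP along a random time: if -(1/n) log₂ P(Z_1,...,Z_n) → H a.s. and the
positive-integer-valued M_n satisfy M_n/n → x > 0 a.s., then
-(1/n) log₂ P(Z_1,...,Z_{M_n}) → H·x a.s.  Here P n ω is the probability of the
realized length-n prefix of the process Z. -/
theorem stmt8 {Ω : Type*} [MeasurableSpace Ω] (μ : Measure Ω) [IsProbabilityMeasure μ]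
    (Z : ℕ → Ω → ℕ) (M : ℕ → Ω → ℕ) (H x : ℝ) (hx : 0 < x)
    (hMpos : ∀ n ω, 0 < M n ω)
    (P : ℕ → Ω → ℝ)
    (hP : ∀ n ω, P n ω = (μ {ω' | ∀ k < n, Z k ω' = Z k ω}).toReal)
    (hAEP : ∀ᵐ ω ∂μ,
      Tendsto (fun n : ℕ => -(1 / (n : ℝ)) * Real.logb 2 (P n ω)) atTop (nhds H))
    (hM : ∀ᵐ ω ∂μ,
      Tendsto (fun n : ℕ => (M n ω : ℝ) / n) atTop (nhds x)) :
    ∀ᵐ ω ∂μ,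
      Tendsto (fun n : ℕ => -(1 / (n : ℝ)) * Real.logb 2 (P (M n ω) ω)) atTop
        (nhds (H * x)) :=
  stmt8_general μ M H x hx P hAEP hM
end

section
/- Given the joint distribution p(T_{j-1}=0, Y_{j-1}=y) = (1+iα)/(2(1+i)) for each y ∈ {0,1}, and conditional distribution π(T_j=0, Y_j=y | Y_{j-1}=y, T_{j-1}=0) = (iα(1+γ) + (1-i)γ)/(1+iα), π(T_j=0, Y_j=ȳ | ·) = (1-γ)(1-i(1-α))/(1+iα), π(T_j=1, Y_j=ȳ | ·) = i(1-α)/(1+iα), π(T_j=1, Y_j=y | ·) = 0, the resulting conditional entropy H(T_j | T_{j-1}, Y_j, Y_{j-1}) equals [(1-γ+γi(1-α))/(1+i)] · h(i(1-α)/(1-γ+γi(1-α))), where h is the binary entropy function. -/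
/-!
Every term carrying `h 0` vanishes, since `T_j` is deterministic there. The two values of
`Y_{j-1}` contribute equally, and in the remaining term the normalisation `1 + iα` cancels both
from the conditional probability of `T_j = 1` and against the weight of `T_{j-1} = 0`.
-/

lemma binary_entropy_formula_zero {h : ℝ → ℝ}
    (hh : ∀ p, h p = -p * Real.logb 2 p - (1 - p) * Real.logb 2 (1 - p)) : h 0 = 0 := by
  simp [hh]

theorem stmt14_general (i α γ : ℝ) (hi : i ∈ Set.Ioo (0:ℝ) 1) (hα : α ∈ Set.Ioo (0:ℝ) 1)
    (h : ℝ → ℝ)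
    (hh : ∀ p, h p = -p * Real.logb 2 p - (1 - p) * Real.logb 2 (1 - p)) :
    (∑ _y : Bool, ((1 + i * α) / (2 * (1 + i))) *
        (((i * α * (1 + γ) + (1 - i) * γ) / (1 + i * α)) * h 0
          + (((1 - γ) * (1 - i * (1 - α)) + i * (1 - α)) / (1 + i * α)) *
              h ((i * (1 - α) / (1 + i * α)) /
                  (((1 - γ) * (1 - i * (1 - α)) + i * (1 - α)) / (1 + i * α)))))
      + (1 - 2 * ((1 + i * α) / (2 * (1 + i)))) * h 0
    = ((1 - γ + γ * i * (1 - α)) / (1 + i)) *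
        h (i * (1 - α) / (1 - γ + γ * i * (1 - α))) := by
  have hA : 1 + i * α ≠ 0 := by have := mul_pos hi.1 hα.1; positivity
  have hflip : (1 - γ) * (1 - i * (1 - α)) + i * (1 - α) = 1 - γ + γ * i * (1 - α) := by ring
  rw [binary_entropy_formula_zero hh, hflip, div_div_div_cancel_right₀ hA, Finset.sum_const,
    Finset.card_univ, Fintype.card_bool]
  simp only [mul_zero, zero_add, add_zero, nsmul_eq_mul, Nat.cast_ofNat]
  field_simp

/-- The conditional entropy H(T_j | T_{j-1}, Y_j, Y_{j-1}) computed from the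
stationary joint law (T_{j-1}=0, Y_{j-1}=y) with mass (1+iα)/(2(1+i)) and the
conditional law of (T_j, Y_j): the contribution when Y_j = Y_{j-1} has entropy h 0
(T_j forced to 0), when Y_j ≠ Y_{j-1} it is h of the conditional probability of
T_j = 1, and the mass with T_{j-1} = 1 contributes h 0. The total equals
[(1-γ+γi(1-α))/(1+i)] h(i(1-α)/(1-γ+γi(1-α))). -/
theorem stmt14 (i α γ : ℝ) (hi : i ∈ Set.Ioo (0:ℝ) 1) (hα : α ∈ Set.Ioo (0:ℝ) 1)
    (hγ : γ ∈ Set.Ioo (0:ℝ) 1)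
    (h : ℝ → ℝ)
    (hh : ∀ p, h p = -p * Real.logb 2 p - (1 - p) * Real.logb 2 (1 - p)) :
    (∑ _y : Bool, ((1 + i * α) / (2 * (1 + i))) *
        (((i * α * (1 + γ) + (1 - i) * γ) / (1 + i * α)) * h 0
          + (((1 - γ) * (1 - i * (1 - α)) + i * (1 - α)) / (1 + i * α)) *
              h ((i * (1 - α) / (1 + i * α)) /
                  (((1 - γ) * (1 - i * (1 - α)) + i * (1 - α)) / (1 + i * α)))))
      + (1 - 2 * ((1 + i * α) / (2 * (1 + i)))) * h 0
    = ((1 - γ + γ * i * (1 - α)) / (1 + i)) *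
        h (i * (1 - α) / (1 - γ + γ * i * (1 - α))) :=
  stmt14_general i α γ hi hα h hh
end
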